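/- arXiv:2407.19420 — 3 statements merged into one kernel-verified Lean document; each statement's English description precedes it below -/
import Mathlib

section
/- Let A be an n-by-n symmetric real matrix with 0 ⪯ A ⪯ I, let p ∈ [0,1], set B = (1−p)·I + p·A, and let k ≥ 0 be a natural number. Then Aᵏ⁺¹ ⪯ (1/2)·(I + B²); that is, (1/2)·(I + B²) − Aᵏ⁺¹ is positive semidefinite. -/
/-!
For `0 ≤ A ≤ 1` the powers of `A` decrease in the Loewner order, so `A ^ (k + 1)` lies below both
`1` and `A`, hence below their convex combination `B`. Finally `B ≤ (1 + B ^ 2) / 2`, the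
difference being `(1 - B) ^ 2 / 2`.
-/

section StarOrderedRing

variable {R : Type*} [Ring R] [PartialOrder R] [StarRing R] [StarOrderedRing R] {a : R}

-- Writing `a - a ^ 2` as a sum of conjugates of `a` and `1 - a` avoids a square root of `a`.
lemma sq_le_self_of_nonneg_of_le_one (h0 : 0 ≤ a) (h1 : a ≤ 1) : a ^ 2 ≤ a := by
  have ha : IsSelfAdjoint a := .of_nonneg h0
  have hsum : 0 ≤ (1 - a) * a * (1 - a) + a * (1 - a) * a :=
    add_nonneg (((IsSelfAdjoint.one R).sub ha).conjugate_nonneg h0)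
      (ha.conjugate_nonneg (sub_nonneg.2 h1))
  have hid : (1 - a) * a * (1 - a) + a * (1 - a) * a = a - a ^ 2 := by noncomm_ring
  exact sub_nonneg.1 (hid ▸ hsum)

lemma pow_antitone_of_nonneg_of_le_one (h0 : 0 ≤ a) (h1 : a ≤ 1) :
    Antitone (a ^ · : ℕ → R) := by
  have ha : IsSelfAdjoint a := .of_nonneg h0
  refine antitone_nat_of_succ_le fun m => ?_
  obtain ⟨i, rfl | rfl⟩ := Nat.even_or_odd' m
  · calc a ^ (2 * i + 1) = a ^ i * a * a ^ i := by rw [← pow_succ, ← pow_add]; ring_nf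
      _ ≤ a ^ i * 1 * a ^ i := (ha.pow i).conjugate_le_conjugate h1
      _ = a ^ (2 * i) := by rw [mul_one, ← pow_add, two_mul]
  · calc a ^ (2 * i + 1 + 1) = a ^ i * a ^ 2 * a ^ i := by rw [← pow_add, ← pow_add]; ring_nf
      _ ≤ a ^ i * a * a ^ i :=
        (ha.pow i).conjugate_le_conjugate (sq_le_self_of_nonneg_of_le_one h0 h1)
      _ = a ^ (2 * i + 1) := by rw [← pow_succ, ← pow_add]; ring_nf

variable [Algebra ℝ R] [StarModule ℝ R]

lemma IsSelfAdjoint.le_half_smul_one_add_sq {b : R} (hb : IsSelfAdjoint b) :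
    b ≤ (1 / 2 : ℝ) • (1 + b ^ 2) := by
  have hsq : 0 ≤ (1 / 2 : ℝ) • ((1 - b) * (1 - b)) :=
    smul_nonneg (by norm_num) ((IsSelfAdjoint.one R).sub hb).mul_self_nonneg
  have hid : (1 / 2 : ℝ) • ((1 - b) * (1 - b)) = (1 / 2 : ℝ) • (1 + b ^ 2) - b := by
    rw [show (1 - b) * (1 - b) = 1 + b ^ 2 - (2 : ℝ) • b by rw [two_smul]; noncomm_ring]
    module
  exact sub_nonneg.1 (hid ▸ hsq)

lemma pow_succ_le_sub_smul_one_add_smul (h0 : 0 ≤ a) (h1 : a ≤ 1) {p : ℝ} (hp0 : 0 ≤ p)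
    (hp1 : p ≤ 1) (k : ℕ) : a ^ (k + 1) ≤ (1 - p) • 1 + p • a := by
  have hanti := pow_antitone_of_nonneg_of_le_one h0 h1
  have hle_one : a ^ (k + 1) ≤ 1 := (hanti (Nat.zero_le _)).trans_eq (pow_zero a)
  have hle_self : a ^ (k + 1) ≤ a := (hanti (Nat.le_add_left 1 k)).trans_eq (pow_one a)
  exact convex_Ici (a ^ (k + 1)) hle_one hle_self (sub_nonneg.2 hp1) hp0 (sub_add_cancel 1 p)

end StarOrderedRing

open scoped MatrixOrder in
theorem stmt_15_general (n : ℕ) (A : Matrix (Fin n) (Fin n) ℝ)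
    (hA0 : A.PosSemidef)
    (hAI : ((1 : Matrix (Fin n) (Fin n) ℝ) - A).PosSemidef)
    (p : ℝ) (hp0 : 0 ≤ p) (hp1 : p ≤ 1) (k : ℕ) :
    let B : Matrix (Fin n) (Fin n) ℝ := (1 - p) • (1 : Matrix (Fin n) (Fin n) ℝ) + p • A
    ((1 / 2 : ℝ) • ((1 : Matrix (Fin n) (Fin n) ℝ) + B ^ 2) - A ^ (k + 1)).PosSemidef := by
  intro B
  have hA : 0 ≤ A := hA0.nonneg
  have hpow_le : A ^ (k + 1) ≤ B :=
    pow_succ_le_sub_smul_one_add_smul hA (Matrix.le_iff.2 hAI) hp0 hp1 k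
  have hB : IsSelfAdjoint B := ((IsSelfAdjoint.of_nonneg hA).pow (k + 1)).of_ge hpow_le
  exact Matrix.le_iff.1 (hpow_le.trans hB.le_half_smul_one_add_sq)

/-- For a symmetric real matrix `A` with `0 ⪯ A ⪯ I`, `p ∈ [0,1]`,
`B = (1−p) I + p A`, and any natural number `k`, we have
`Aᵏ⁺¹ ⪯ (1/2)(I + B²)`; that is, `(1/2)(I + B²) − Aᵏ⁺¹` is positive semidefinite. -/
theorem stmt_15 (n : ℕ) (A : Matrix (Fin n) (Fin n) ℝ)
    (hA : A.IsHermitian) (hA0 : A.PosSemidef)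
    (hAI : ((1 : Matrix (Fin n) (Fin n) ℝ) - A).PosSemidef)
    (p : ℝ) (hp0 : 0 ≤ p) (hp1 : p ≤ 1) (k : ℕ) :
    let B : Matrix (Fin n) (Fin n) ℝ := (1 - p) • (1 : Matrix (Fin n) (Fin n) ℝ) + p • A
    ((1 / 2 : ℝ) • ((1 : Matrix (Fin n) (Fin n) ℝ) + B ^ 2) - A ^ (k + 1)).PosSemidef :=
  stmt_15_general n A hA0 hAI p hp0 hp1 k
end

section
/- Let Σ be an n-by-n symmetric positive definite real matrix, set A = (I + Σ⁻¹)⁻¹, let p ∈ [0,1], set B = (1−p)·I + p·A, and let k ≥ 1 be a natural number. Then the matrices A²ᵏ·Σ and (1/2)·Aᵏ⁻¹·(I + B²)·Σ are both symmetric, and A²ᵏ·Σ ⪯ (1/2)·Aᵏ⁻¹·(I + B²)·Σ; that is, (1/2)·Aᵏ⁻¹·(I + B²)·Σ − A²ᵏ·Σ is positive semidefinite. -/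
open Matrix

section aux

variable {n : ℕ}

/-- conjugation of a diagonal matrix by `U`. -/
private def conjD (U : Matrix (Fin n) (Fin n) ℝ) (f : Fin n → ℝ) : Matrix (Fin n) (Fin n) ℝ :=
  U * Matrix.diagonal f * star U

variable {U : Matrix (Fin n) (Fin n) ℝ}

private lemma hU' (hU : star U * U = 1) : U * star U = 1 :=
  mul_eq_one_comm.mp hU

private lemma conjD_one (hU : star U * U = 1) : conjD U 1 = 1 := by
  rw [conjD, show Matrix.diagonal (1 : Fin n → ℝ) = 1 from Matrix.diagonal_one,
    Matrix.mul_one, hU' hU]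

private lemma conjD_add (f g : Fin n → ℝ) : conjD U (f + g) = conjD U f + conjD U g := by
  rw [conjD, conjD, conjD, ← Matrix.add_mul, ← Matrix.mul_add,
    Matrix.diagonal_add]
  rfl

private lemma conjD_sub (f g : Fin n → ℝ) : conjD U (f - g) = conjD U f - conjD U g := by
  rw [conjD, conjD, conjD, ← Matrix.sub_mul, ← Matrix.mul_sub]
  congr 1
  congr 1
  ext i j
  by_cases h : i = j <;> simp [Matrix.diagonal, h]

private lemma conjD_mul (hU : star U * U = 1) (f g : Fin n → ℝ) :
    conjD U (f * g) = conjD U f * conjD U g := by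
  symm
  calc conjD U f * conjD U g
      = U * (Matrix.diagonal f * (star U * U) * Matrix.diagonal g) * star U := by
        simp only [conjD, Matrix.mul_assoc]
    _ = conjD U (f * g) := by
        rw [hU, Matrix.mul_one, Matrix.diagonal_mul_diagonal]
        rfl

private lemma conjD_smul (c : ℝ) (f : Fin n → ℝ) : conjD U (c • f) = c • conjD U f := by
  simp [conjD, Matrix.diagonal_smul, Matrix.smul_mul, Matrix.mul_smul]

private lemma conjD_pow (hU : star U * U = 1) (f : Fin n → ℝ) (m : ℕ) : conjD U (f ^ m) = conjD U f ^ m := by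
  induction m with
  | zero => simpa using conjD_one hU
  | succ m ih => rw [pow_succ, pow_succ, ← ih, ← conjD_mul hU]

private lemma conjD_inv (hU : star U * U = 1) (f : Fin n → ℝ) (hf : ∀ i, f i ≠ 0) :
    (conjD U f)⁻¹ = conjD U f⁻¹ := by
  apply Matrix.inv_eq_right_inv
  have h1 : f * f⁻¹ = 1 := by funext i; simp [hf i]
  rw [← conjD_mul hU, h1, conjD_one hU]

private lemma conjD_isHermitian (f : Fin n → ℝ) : (conjD U f).IsHermitian := by
  unfold conjD Matrix.IsHermitian
  rw [conjTranspose_mul, conjTranspose_mul, ← Matrix.mul_assoc]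
  simp [star_eq_conjTranspose, Matrix.diagonal_conjTranspose]

private lemma conjD_posSemidef (f : Fin n → ℝ) (hf : ∀ i, 0 ≤ f i) :
    (conjD U f).PosSemidef := by
  have h : (Matrix.diagonal f).PosSemidef := Matrix.posSemidef_diagonal_iff.mpr hf
  simpa [conjD, star_eq_conjTranspose] using h.mul_mul_conjTranspose_same U

end aux

set_option maxHeartbeats 1000000 in
/-- Let `Σ` (written `S` below) be symmetric positive definite, `A = (I + Σ⁻¹)⁻¹`,
`p ∈ [0,1]`, `B = (1−p) I + p A`, and `k ≥ 1`. Then `A²ᵏ Σ` and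
`(1/2) Aᵏ⁻¹ (I + B²) Σ` are both symmetric, and
`A²ᵏ Σ ⪯ (1/2) Aᵏ⁻¹ (I + B²) Σ` in the Loewner order. -/
theorem stmt_16 (n : ℕ) (S : Matrix (Fin n) (Fin n) ℝ) (hS : S.PosDef)
    (p : ℝ) (hp0 : 0 ≤ p) (hp1 : p ≤ 1) (k : ℕ) (hk : 1 ≤ k) :
    let A : Matrix (Fin n) (Fin n) ℝ := (1 + S⁻¹)⁻¹
    let B : Matrix (Fin n) (Fin n) ℝ := (1 - p) • (1 : Matrix (Fin n) (Fin n) ℝ) + p • A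
    (A ^ (2 * k) * S).IsHermitian ∧
      ((1 / 2 : ℝ) • (A ^ (k - 1) * ((1 : Matrix (Fin n) (Fin n) ℝ) + B ^ 2) * S)).IsHermitian ∧
      ((1 / 2 : ℝ) • (A ^ (k - 1) * ((1 : Matrix (Fin n) (Fin n) ℝ) + B ^ 2) * S)
        - A ^ (2 * k) * S).PosSemidef := by
  intro A B
  set U : Matrix (Fin n) (Fin n) ℝ := (hS.1.eigenvectorUnitary : Matrix (Fin n) (Fin n) ℝ)
    with hUdef
  have hU : star U * U = 1 :=
    Matrix.mem_unitaryGroup_iff'.mp hS.1.eigenvectorUnitary.2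
  set d : Fin n → ℝ := hS.1.eigenvalues with hd
  have hdpos : ∀ i, 0 < d i := hS.eigenvalues_pos
  have hdne : ∀ i, d i ≠ 0 := fun i => (hdpos i).ne'
  have hSc : S = conjD U d := by
    have := hS.1.spectral_theorem
    simpa [conjD, Function.comp] using this
  clear hUdef hd
  clear_value U d
  -- scalar functions
  set a : Fin n → ℝ := (1 + d⁻¹)⁻¹ with ha
  have hden : ∀ i, (1 + d⁻¹) i ≠ 0 := by
    intro i
    have h0 := inv_pos.mpr (hdpos i)
    have : 0 < 1 + (d i)⁻¹ := by linarith
    simpa [Pi.add_apply, Pi.inv_apply] using this.ne'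
  have hApos : ∀ i, 0 < a i := by
    intro i
    have h0 := inv_pos.mpr (hdpos i)
    have h1 : 0 < 1 + (d i)⁻¹ := by linarith
    simpa [ha, Pi.inv_apply, Pi.add_apply] using inv_pos.mpr h1
  have hAlt1 : ∀ i, a i < 1 := by
    intro i
    have h1 : (1 : ℝ) < 1 + (d i)⁻¹ := by
      have := inv_pos.mpr (hdpos i); linarith
    have := inv_lt_one_of_one_lt₀ h1
    simpa [ha, Pi.inv_apply, Pi.add_apply] using this
  have hAc : A = conjD U a := by
    show (1 + S⁻¹)⁻¹ = conjD U a
    rw [hSc, conjD_inv hU d hdne, ← conjD_one hU, ← conjD_add, conjD_inv hU _ hden]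
  set b : Fin n → ℝ := (1 - p) • 1 + p • a with hb
  have hBc : B = conjD U b := by
    show (1 - p) • (1 : Matrix (Fin n) (Fin n) ℝ) + p • A = conjD U b
    rw [hAc, hb, conjD_add _ _, conjD_smul, conjD_smul, conjD_one hU]
  refine ⟨?_, ?_, ?_⟩
  · rw [hAc, hSc]
    simp only [← conjD_pow hU, ← conjD_mul hU]
    exact conjD_isHermitian _
  · rw [hAc, hBc, hSc]
    simp only [← conjD_one hU, ← conjD_pow hU, ← conjD_smul, ← conjD_add, ← conjD_mul hU]
    exact conjD_isHermitian _
  · rw [hAc, hBc, hSc]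
    simp only [← conjD_one hU, ← conjD_pow hU, ← conjD_smul, ← conjD_add, ← conjD_mul hU,
      ← conjD_sub]
    apply conjD_posSemidef
    intro i
    simp only [Pi.sub_apply, Pi.smul_apply, Pi.mul_apply, Pi.add_apply, Pi.pow_apply,
      Pi.one_apply, smul_eq_mul]
    have hai : 0 < a i := hApos i
    have hai1 : a i < 1 := hAlt1 i
    have hbi : b i = (1 - p) + p * a i := by simp [hb]
    have hba : a i ≤ b i := by rw [hbi]; nlinarith
    have hb1 : b i ≤ 1 := by rw [hbi]; nlinarith
    have key : a i ^ (2 * k) ≤ (1 / 2 : ℝ) * (a i ^ (k - 1) * (1 + b i ^ 2)) := by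
      have h2b : 2 * b i ≤ 1 + b i ^ 2 := by nlinarith [sq_nonneg (1 - b i)]
      have h1 : a i ^ (2 * k) ≤ a i ^ k := by
        apply pow_le_pow_of_le_one hai.le hai1.le
        omega
      have h2 : a i ^ k = a i ^ (k - 1) * a i := by
        rw [← pow_succ]
        congr 1
        omega
      have hnn := pow_nonneg hai.le (k - 1)
      have h3 : a i ^ (k - 1) * a i ≤ a i ^ (k - 1) * b i := by nlinarith
      have h4 : a i ^ (k - 1) * b i ≤ (1 / 2 : ℝ) * (a i ^ (k - 1) * (1 + b i ^ 2)) := by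
        nlinarith
      linarith [h1, h2 ▸ h3]
    nlinarith [key, (hdpos i).le]
end

section
/- Let Σ be an n-by-n symmetric positive definite real matrix, set A = (I + Σ⁻¹)⁻¹, let p ∈ [0,1], set B = (1−p)·I + p·A, and let k ≥ 1 be a natural number. Then trace(A²ᵏ·Σ) ≤ (1/2)·trace(Aᵏ⁻¹·(I + B²)·Σ). -/
open Matrix

section Aux

variable {n : ℕ}

private lemma scalar_key (lam p : ℝ) (hl : 0 < lam) (hp0 : 0 ≤ p) (hp1 : p ≤ 1)
    (k : ℕ) (hk : 1 ≤ k) :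
    ((1 + lam⁻¹)⁻¹) ^ (2 * k) * lam ≤
      (1 / 2 : ℝ) * (((1 + lam⁻¹)⁻¹) ^ (k - 1) *
        (1 + ((1 - p) * 1 + p * (1 + lam⁻¹)⁻¹) ^ 2) * lam) := by
  set a : ℝ := (1 + lam⁻¹)⁻¹ with ha
  have hinv : 0 < lam⁻¹ := inv_pos.mpr hl
  have h1 : (1 : ℝ) < 1 + lam⁻¹ := by linarith
  have ha0 : 0 < a := by positivity
  have ha1 : a < 1 := by
    rw [ha]; exact inv_lt_one_of_one_lt₀ h1
  set b : ℝ := (1 - p) * 1 + p * a with hb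
  have hba : a ≤ b := by nlinarith
  have hb1 : b ≤ 1 := by nlinarith
  have hb0 : 0 < b := lt_of_lt_of_le ha0 hba
  -- a^(2k) ≤ (1/2) a^(k-1) (1 + b^2)
  have hsplit : 2 * k = (k - 1) + (k + 1) := by omega
  have h2 : a ^ (2 * k) = a ^ (k - 1) * a ^ (k + 1) := by
    rw [hsplit, pow_add]
  have h3 : a ^ (k + 1) ≤ a ^ 2 :=
    pow_le_pow_of_le_one ha0.le ha1.le (by omega)
  have h4 : a ^ 2 ≤ (1 / 2) * (1 + b ^ 2) := by nlinarith
  have hpow0 : 0 ≤ a ^ (k - 1) := pow_nonneg ha0.le _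
  have : a ^ (2 * k) ≤ (1 / 2) * (a ^ (k - 1) * (1 + b ^ 2)) := by
    calc a ^ (2 * k) = a ^ (k - 1) * a ^ (k + 1) := h2
      _ ≤ a ^ (k - 1) * ((1 / 2) * (1 + b ^ 2)) := by
          exact mul_le_mul_of_nonneg_left (h3.trans h4) hpow0
      _ = (1 / 2) * (a ^ (k - 1) * (1 + b ^ 2)) := by ring
  nlinarith

end Aux

/-- Let `Σ` (written `S` below) be symmetric positive definite, `A = (I + Σ⁻¹)⁻¹`,
`p ∈ [0,1]`, `B = (1−p) I + p A`, and `k ≥ 1`. Then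
`trace(A²ᵏ Σ) ≤ (1/2) trace(Aᵏ⁻¹ (I + B²) Σ)`. -/
theorem stmt_17 (n : ℕ) (S : Matrix (Fin n) (Fin n) ℝ) (hS : S.PosDef)
    (p : ℝ) (hp0 : 0 ≤ p) (hp1 : p ≤ 1) (k : ℕ) (hk : 1 ≤ k) :
    let A : Matrix (Fin n) (Fin n) ℝ := (1 + S⁻¹)⁻¹
    let B : Matrix (Fin n) (Fin n) ℝ := (1 - p) • (1 : Matrix (Fin n) (Fin n) ℝ) + p • A
    (A ^ (2 * k) * S).trace ≤
      (1 / 2 : ℝ) * (A ^ (k - 1) * ((1 : Matrix (Fin n) (Fin n) ℝ) + B ^ 2) * S).trace := by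
  intro A B
  have hH : S.IsHermitian := hS.isHermitian
  set U : Matrix (Fin n) (Fin n) ℝ := (hH.eigenvectorUnitary : Matrix (Fin n) (Fin n) ℝ)
    with hU
  have hUU : U * star U = 1 := Matrix.mem_unitaryGroup_iff.mp hH.eigenvectorUnitary.2
  have hUU' : star U * U = 1 := Matrix.mem_unitaryGroup_iff'.mp hH.eigenvectorUnitary.2
  set lam : Fin n → ℝ := hH.eigenvalues with hlam
  -- the conjugation map
  set c : (Fin n → ℝ) → Matrix (Fin n) (Fin n) ℝ := fun d => U * diagonal d * star U with hc
  have hcomp : (RCLike.ofReal ∘ hH.eigenvalues : Fin n → ℝ) = lam := by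
    funext i; simp [hlam]
  have hSeq : S = c lam := by
    have := hH.spectral_theorem
    rw [hcomp] at this
    exact this
  have hc_one : c 1 = 1 := by
    have : diagonal (1 : Fin n → ℝ) = 1 := diagonal_one
    simp only [hc, this, mul_one, hUU]
  have hc_add : ∀ d e, c d + c e = c (d + e) := by
    intro d e
    simp only [hc]
    have h : diagonal (d + e) = diagonal d + diagonal e := (diagonal_add d e).symm
    rw [h, mul_add, add_mul]
  have hc_mul : ∀ d e, c d * c e = c (d * e) := by
    intro d e
    simp only [hc, mul_assoc]
    rw [← mul_assoc (star U) U, hUU', one_mul, ← mul_assoc (diagonal d), diagonal_mul_diagonal]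
    rfl
  have hc_smul : ∀ (r : ℝ) d, r • c d = c (r • d) := by
    intro r d
    simp only [hc, diagonal_smul]
    rw [Matrix.mul_smul, Matrix.smul_mul]
  have hc_inv : ∀ d : Fin n → ℝ, (∀ i, d i ≠ 0) → (c d)⁻¹ = c d⁻¹ := by
    intro d hd
    apply inv_eq_right_inv
    rw [hc_mul]
    have : d * d⁻¹ = 1 := by
      funext i; simp [Pi.mul_apply, mul_inv_cancel₀ (hd i)]
    rw [this, hc_one]
  have hc_pow : ∀ (d : Fin n → ℝ) (m : ℕ), (c d) ^ m = c (d ^ m) := by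
    intro d m
    induction m with
    | zero => simp [hc_one]
    | succ m ih => rw [pow_succ, ih, hc_mul, ← pow_succ]
  have hc_trace : ∀ d, (c d).trace = ∑ i, d i := by
    intro d
    simp only [hc]
    rw [trace_mul_cycle, hUU', one_mul, trace_diagonal]
  have hlam_pos : ∀ i, 0 < lam i := fun i => hS.eigenvalues_pos i
  have hlam_ne : ∀ i, lam i ≠ 0 := fun i => (hlam_pos i).ne'
  -- A = c a
  set a : Fin n → ℝ := fun i => (1 + (lam i)⁻¹)⁻¹ with haf
  have hSinv : S⁻¹ = c lam⁻¹ := by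
    rw [hSeq, hc_inv lam hlam_ne]
  have hA : A = c a := by
    show (1 + S⁻¹)⁻¹ = c a
    rw [hSinv, ← hc_one, hc_add, hc_inv]
    · congr 1
    · intro i
      have : 0 < (1 : ℝ) + (lam i)⁻¹ := by
        have := inv_pos.mpr (hlam_pos i); linarith
      simpa using this.ne'
  set b : Fin n → ℝ := fun i => (1 - p) * 1 + p * a i with hbf
  have hB : B = c b := by
    show (1 - p) • (1 : Matrix (Fin n) (Fin n) ℝ) + p • A = c b
    rw [hA, ← hc_one, hc_smul, hc_smul, hc_add]
    congr 1
  -- traces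
  have hLHS : (A ^ (2 * k) * S).trace = ∑ i, (a i) ^ (2 * k) * lam i := by
    rw [hA, hc_pow, hSeq, hc_mul, hc_trace]
    simp
  have hRHS : (A ^ (k - 1) * ((1 : Matrix (Fin n) (Fin n) ℝ) + B ^ 2) * S).trace
      = ∑ i, (a i) ^ (k - 1) * (1 + (b i) ^ 2) * lam i := by
    rw [hA, hB, hc_pow, hc_pow, ← hc_one, hc_add, hSeq, hc_mul, hc_mul, hc_trace]
    simp
  rw [hLHS, hRHS, Finset.mul_sum]
  apply Finset.sum_le_sum
  intro i _
  exact scalar_key (lam i) p (hlam_pos i) hp0 hp1 k hk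
end
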